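/- arXiv:1006.3526 — 3 statements merged into one kernel-verified Lean document; each statement's English description precedes it below -/
import Mathlib

section
/- For μ ∈ ℂ with μ ≠ 0, the function f(z) = 1 - exp(μ log(1 - z)) (with the principal branch of log, so f(0) = 0) is univalent on the unit disk if and only if |μ + 1| ≤ 1 or |μ - 1| ≤ 1. -/
open Complex Metric Set

/-! With `w = log (1 - z)` we have `f z = 1 - exp (μ w)`, and `z ↦ w` is injective on the disk.
So `f` fails to be injective exactly when two values `w₁ ≠ w₂` differ by a period `2πik/μ` of
`exp (μ ·)`. The values `w` lie in the strip `|Im w| < π/2` and their differences fill the strip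
`|Im t| < π`; as `Im (2πik/μ) = 2πk Re (1/μ)`, injectivity amounts to `|Re (1/μ)| ≥ 1/2`. Finally
`μ ↦ 1/μ` maps the closed disks `|μ ∓ 1| ≤ 1`, punctured at `0`, onto the half-planes
`±Re (1/μ) ≥ 1/2`. -/

namespace Complex

theorem norm_sub_one_le_one_iff_half_le_re_inv {μ : ℂ} (hμ : μ ≠ 0) :
    ‖μ - 1‖ ≤ 1 ↔ 1 / 2 ≤ (μ⁻¹).re := by
  have hs : 0 < normSq μ := normSq_pos.2 hμ
  have hsq : ‖μ - 1‖ ^ 2 = normSq μ - 2 * μ.re + 1 := by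
    rw [Complex.sq_norm, normSq_apply, normSq_apply]
    simp only [sub_re, sub_im, one_re, one_im]
    ring
  rw [inv_re, le_div_iff₀ hs, ← sq_le_one_iff₀ (norm_nonneg _), hsq]
  constructor <;> intro h <;> linarith

theorem norm_add_one_le_one_iff_re_inv_le_neg_half {μ : ℂ} (hμ : μ ≠ 0) :
    ‖μ + 1‖ ≤ 1 ↔ (μ⁻¹).re ≤ -(1 / 2) := by
  rw [← norm_neg, neg_add', norm_sub_one_le_one_iff_half_le_re_inv (neg_ne_zero.2 hμ), inv_neg,
    neg_re, le_neg]

theorem norm_one_sub_exp_lt_one_iff (u : ℂ) :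
    ‖1 - exp u‖ < 1 ↔ Real.exp u.re < 2 * Real.cos u.im := by
  have hsq : ‖1 - exp u‖ ^ 2 = 1 - Real.exp u.re * (2 * Real.cos u.im - Real.exp u.re) := by
    rw [Complex.sq_norm, normSq_apply]
    simp only [sub_re, sub_im, one_re, one_im, exp_re, exp_im]
    linear_combination (Real.exp u.re) ^ 2 * Real.sin_sq_add_cos_sq u.im
  rw [← sq_lt_one_iff₀ (norm_nonneg _), hsq, sub_lt_self_iff, mul_pos_iff_of_pos_left u.re.exp_pos,
    sub_pos]

end Complex

theorem abs_im_log_one_sub_lt_pi_div_two {z : ℂ} (hz : z ∈ ball (0 : ℂ) 1) :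
    |(log (1 - z)).im| < Real.pi / 2 := by
  rw [log_im, abs_arg_lt_pi_div_two_iff, sub_re, one_re]
  left
  linarith [re_le_norm z, mem_ball_zero_iff.1 hz]

theorem exists_mem_ball_log_one_sub_eq {u : ℂ} (him : |u.im| < Real.pi / 2)
    (hre : Real.exp u.re < 2 * Real.cos u.im) : ∃ z ∈ ball (0 : ℂ) 1, log (1 - z) = u := by
  refine ⟨1 - exp u, mem_ball_zero_iff.2 ((norm_one_sub_exp_lt_one_iff u).2 hre), ?_⟩
  have := abs_lt.1 him
  rw [sub_sub_cancel]
  exact log_exp (by linarith [Real.pi_pos]) (by linarith [Real.pi_pos])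

theorem exists_log_one_sub_sub_log_one_sub_eq {t : ℂ} (ht : |t.im| < Real.pi) :
    ∃ z₁ ∈ ball (0 : ℂ) 1, ∃ z₂ ∈ ball (0 : ℂ) 1, log (1 - z₁) - log (1 - z₂) = t := by
  -- split `Im t` evenly between the two points and push both real parts far enough to the left
  set y := t.im / 2
  have hy : |y| < Real.pi / 2 := by rw [abs_div, abs_two]; linarith
  have hcos : 0 < Real.cos y := Real.cos_pos_of_mem_Ioo (abs_lt.1 hy)
  have hexp {x : ℝ} (hx : x ≤ Real.log (Real.cos y)) : Real.exp x < 2 * Real.cos y := by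
    calc Real.exp x ≤ Real.cos y := (Real.exp_le_exp.2 hx).trans_eq (Real.exp_log hcos)
      _ < 2 * Real.cos y := by linarith
  set x₁ := Real.log (Real.cos y) + min t.re 0
  set x₂ := x₁ - t.re
  obtain ⟨z₁, hz₁, hlog₁⟩ := exists_mem_ball_log_one_sub_eq (u := ⟨x₁, y⟩) hy
    (hexp (by linarith [min_le_right t.re 0]))
  obtain ⟨z₂, hz₂, hlog₂⟩ := exists_mem_ball_log_one_sub_eq (u := ⟨x₂, -y⟩) (by rwa [abs_neg])
    (by rw [Real.cos_neg]; exact hexp (by linarith [min_le_left t.re 0]))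
  refine ⟨z₁, hz₁, z₂, hz₂, ?_⟩
  rw [hlog₁, hlog₂]
  apply Complex.ext <;> simp [x₂, y]

theorem injOn_one_sub_exp_mul_log_one_sub_iff (μ : ℂ) :
    InjOn (fun z : ℂ => 1 - exp (μ * log (1 - z))) (ball (0 : ℂ) 1) ↔
      ∀ t : ℂ, |t.im| < Real.pi → exp (μ * t) = 1 → t = 0 := by
  constructor
  · intro hinj t ht hexp
    obtain ⟨z₁, hz₁, z₂, hz₂, rfl⟩ := exists_log_one_sub_sub_log_one_sub_eq ht
    have hf : exp (μ * log (1 - z₁)) = exp (μ * log (1 - z₂)) := by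
      rw [← div_eq_one_iff_eq (exp_ne_zero _), ← exp_sub, ← mul_sub, hexp]
    rw [hinj hz₁ hz₂ (by simp only [hf]), sub_self]
  · intro h z₁ hz₁ z₂ hz₂ hf
    have hexp : exp (μ * (log (1 - z₁) - log (1 - z₂))) = 1 := by
      rw [mul_sub, exp_sub, div_eq_one_iff_eq (exp_ne_zero _)]
      simpa using hf
    have him : |(log (1 - z₁) - log (1 - z₂)).im| < Real.pi := by
      rw [sub_im]
      linarith [abs_sub (log (1 - z₁)).im (log (1 - z₂)).im,
        abs_im_log_one_sub_lt_pi_div_two hz₁, abs_im_log_one_sub_lt_pi_div_two hz₂]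
    have hlog := sub_eq_zero.1 (h _ him hexp)
    have hne {z : ℂ} (hz : z ∈ ball (0 : ℂ) 1) : 1 - z ≠ 0 := by
      rw [sub_ne_zero]; rintro rfl; simp at hz
    exact sub_right_inj.1 ((exp_log (hne hz₁)).symm.trans (hlog ▸ exp_log (hne hz₂)))

theorem forall_exp_mul_eq_one_imp_eq_zero_iff {μ : ℂ} (hμ : μ ≠ 0) :
    (∀ t : ℂ, |t.im| < Real.pi → exp (μ * t) = 1 → t = 0) ↔ 1 / 2 ≤ |(μ⁻¹).re| := by
  have him (n : ℤ) : |(n * (2 * Real.pi * I / μ)).im| = |(n : ℝ)| * (2 * Real.pi) * |(μ⁻¹).re| := by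
    have h : (n * (2 * Real.pi * I / μ) : ℂ) = ((n * (2 * Real.pi) : ℝ) : ℂ) * (I * μ⁻¹) := by
      push_cast; ring
    rw [h, im_ofReal_mul, I_mul_im, abs_mul, abs_mul, abs_of_pos Real.two_pi_pos]
  constructor
  · intro h
    by_contra! hlt
    have hne : (1 : ℤ) * (2 * Real.pi * I / μ) ≠ 0 := by simp [hμ, Real.pi_ne_zero]
    refine hne (h _ ?_ (exp_eq_one_iff.2 ⟨1, by field_simp⟩))
    rw [him]
    nlinarith [Real.pi_pos]
  · intro hr t ht hexp
    obtain ⟨n, hn⟩ := exp_eq_one_iff.1 hexp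
    obtain rfl : t = n * (2 * Real.pi * I / μ) := by field_simp; linear_combination hn
    obtain rfl | hn0 := eq_or_ne n 0
    · simp
    rw [him] at ht
    have hn1 : (1 : ℝ) ≤ |(n : ℝ)| := by exact_mod_cast Int.one_le_abs hn0
    nlinarith [Real.pi_pos, mul_le_mul hn1 hr (by norm_num) (abs_nonneg _)]

/-- For `μ ≠ 0`, `f(z) = 1 - exp(μ log(1-z))` is univalent on the unit disk iff
`|μ+1| ≤ 1` or `|μ-1| ≤ 1`. -/
theorem royster_univalence (μ : ℂ) (hμ : μ ≠ 0) :
    InjOn (fun z : ℂ => 1 - Complex.exp (μ * Complex.log (1 - z))) (ball (0:ℂ) 1) ↔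
      (‖μ + 1‖ ≤ 1 ∨ ‖μ - 1‖ ≤ 1) := by
  rw [injOn_one_sub_exp_mul_log_one_sub_iff, forall_exp_mul_eq_one_imp_eq_zero_iff hμ,
    norm_add_one_le_one_iff_re_inv_le_neg_half hμ, norm_sub_one_le_one_iff_half_le_re_inv hμ,
    le_abs, le_neg, or_comm]
end

section
/- Let Ω ⊆ ℂⁿ be open and connected, and let f, g : Ω → ℂⁿ be holomorphic with Df(z) and Dg(z) invertible for all z ∈ Ω. If Df(z)⁻¹ D²f(z) = Dg(z)⁻¹ D²g(z) as bilinear maps for every z ∈ Ω, then there exist a constant invertible matrix A ∈ GL(n, ℂ) and b ∈ ℂⁿ such that f(z) = A g(z) + b for all z ∈ Ω. -/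
open Complex Set
open Metric Filter Topology
open scoped Real

/-!
Put `φ z = Df(z) Dg(z)⁻¹`. By the product rule and `d(B⁻¹) = -B⁻¹ dB B⁻¹`,
`dφ(u) = Df (P_f(u) - P_g(u)) Dg⁻¹ = 0`, so `φ` is a constant `A` on the connected set `Ω`;
then `D(f - A ∘ g) = 0`, and `f - A ∘ g` is constant.

The analytic input is that `Df` is again holomorphic. For this, `Df(z) u` is the Cauchy integral
`(2πi)⁻¹ ∮ f(z + t u) t⁻² dt`, which may be differentiated in `z` under the integral sign because
the Cauchy estimate bounds `‖Df‖` locally.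
-/

section BanachAlgebra

variable {𝕜 X 𝔸 : Type*} [NontriviallyNormedField 𝕜] [NormedAddCommGroup X] [NormedSpace 𝕜 X]
  [NormedRing 𝔸] [NormedAlgebra 𝕜 𝔸] [CompleteSpace 𝔸] {a b : X → 𝔸} {a' b' : X →L[𝕜] 𝔸} {x : X}

theorem HasFDerivAt.mul_ringInverse_eq_zero (ha : HasFDerivAt a a' x) (hb : HasFDerivAt b b' x)
    (hbx : IsUnit (b x)) (h : ∀ v, a' v = a x * Ring.inverse (b x) * b' v) :
    HasFDerivAt (fun y => a y * Ring.inverse (b y)) (0 : X →L[𝕜] 𝔸) x := by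
  obtain ⟨B, hB⟩ := hbx
  have hinv := (hB ▸ hasFDerivAt_ringInverse (𝕜 := 𝕜) B).comp x hb
  refine (ha.mul' hinv).congr_fderiv ?_
  ext1 v
  simp [h, ← hB, mul_assoc]

end BanachAlgebra

theorem ContinuousLinearMap.IsInvertible.isUnit {R M : Type*} [Semiring R] [TopologicalSpace M]
    [AddCommMonoid M] [Module R M] {f : M →L[R] M} (hf : f.IsInvertible) : IsUnit f := by
  obtain ⟨e, rfl⟩ := hf
  exact ⟨(ContinuousLinearEquiv.unitsEquiv R M).symm e, rfl⟩

theorem differentiableAt_clm_of_forall_apply {𝕜 D E F : Type*} [NontriviallyNormedField 𝕜]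
    [CompleteSpace 𝕜] [NormedAddCommGroup D] [NormedSpace 𝕜 D] [NormedAddCommGroup E]
    [NormedSpace 𝕜 E] [FiniteDimensional 𝕜 E] [NormedAddCommGroup F] [NormedSpace 𝕜 F]
    {Φ : D → E →L[𝕜] F} {x : D} (h : ∀ y, DifferentiableAt 𝕜 (fun x => Φ x y) x) :
    DifferentiableAt 𝕜 Φ x := by
  let d := Module.finrank 𝕜 E
  let e₁ : E ≃L[𝕜] (Fin d → 𝕜) := .ofFinrankEq (Module.finrank_fin_fun 𝕜).symm
  let e₂ := (e₁.arrowCongr (1 : F ≃L[𝕜] F)).trans (ContinuousLinearEquiv.piRing (Fin d))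
  rw [← Function.id_comp Φ, ← e₂.symm_comp_self]
  exact e₂.symm.differentiableAt.comp x (differentiableAt_pi.2 fun i => h _)

section Holomorphic

variable {E F : Type*} [NormedAddCommGroup E] [NormedSpace ℂ E] [NormedAddCommGroup F]
  [NormedSpace ℂ F] {f : E → F} {s : Set E} {z : E}

theorem DifferentiableOn.exists_eventually_norm_fderiv_le (hf : DifferentiableOn ℂ f s)
    (hs : s ∈ 𝓝 z) : ∃ C, ∀ᶠ w in 𝓝 z, ‖fderiv ℂ f w‖ ≤ C := by
  have hcont : f ⁻¹' ball (f z) 1 ∈ 𝓝 z :=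
    (hf.continuousOn.continuousAt hs).preimage_mem_nhds (ball_mem_nhds _ one_pos)
  obtain ⟨ε, hε, hεs⟩ := Metric.mem_nhds_iff.1 (inter_mem hs hcont)
  refine ⟨2 / (ε / 2), ?_⟩
  filter_upwards [ball_mem_nhds z (half_pos hε)] with w hw
  -- Cauchy estimate on the ball of radius `ε / 2` about `w`, on which `f` oscillates by less than 2
  have hsub : ball w (ε / 2) ⊆ ball z ε := ball_subset_ball' (by rw [mem_ball] at hw; linarith)
  refine Complex.norm_fderiv_le_div_of_mapsTo_ball (hf.mono fun x hx => (hεs (hsub hx)).1)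
    (fun x hx => ?_) (half_pos hε)
  have hx := (hεs (hsub hx)).2
  have hw' := (hεs (hsub (mem_ball_self (half_pos hε)))).2
  rw [mem_preimage, mem_ball] at hx hw'
  rw [mem_closedBall]
  linarith [dist_triangle_right (f x) (f w) (f z)]

theorem DifferentiableOn.fderiv_apply_eq_circleIntegral [CompleteSpace F]
    (hf : DifferentiableOn ℂ f s) (hs : IsOpen s) {u : E} {R : ℝ} (hR : 0 < R)
    (hdisc : ∀ t ∈ closedBall (0 : ℂ) R, z + t • u ∈ s) :
    fderiv ℂ f z u = (2 * π * I)⁻¹ • ∮ t in C(0, R), (1 / t ^ 2) • f (z + t • u) := by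
  have hline : DifferentiableOn ℂ (fun t : ℂ => f (z + t • u)) (closedBall 0 R) :=
    hf.comp (by fun_prop) hdisc
  have hz : z ∈ s := by simpa using hdisc 0 (mem_closedBall_self hR.le)
  have hderiv : HasDerivAt (fun t : ℂ => f (z + t • u)) (fderiv ℂ f z u) 0 := by
    have hlin : HasDerivAt (fun t : ℂ => z + t • u) u 0 := by
      simpa using ((hasDerivAt_id (0 : ℂ)).smul_const u).const_add z
    exact ((hf.differentiableAt (hs.mem_nhds hz)).hasFDerivAt.comp_hasDerivAt_of_eq 0 hlin
      (by simp))
  rw [eq_inv_smul_iff₀ two_pi_I_ne_zero, ← hderiv.deriv]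
  simpa using (hline.deriv_eq_smul_circleIntegral hR).symm

theorem add_smul_mem_ball {w u : E} {t : ℂ} {ε R : ℝ} (hw : w ∈ ball z (ε / 2)) (ht : ‖t‖ ≤ R)
    (hRu : R * ‖u‖ < ε / 2) : w + t • u ∈ ball z ε := by
  rw [mem_ball, dist_eq_norm, add_sub_right_comm] at *
  calc ‖w - z + t • u‖ ≤ ‖w - z‖ + ‖t‖ * ‖u‖ := norm_smul t u ▸ norm_add_le _ _
    _ < ε := by nlinarith [norm_nonneg u]

theorem differentiableAt_circleIntegral_comp_add_smul [FiniteDimensional ℂ E] [CompleteSpace F]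
    [SecondCountableTopology F] {u : E} {ε R C : ℝ} (hf : DifferentiableOn ℂ f (ball z ε))
    (hC : ∀ w ∈ ball z ε, ‖fderiv ℂ f w‖ ≤ C) (hR : 0 < R) (hRu : R * ‖u‖ < ε / 2) :
    DifferentiableAt ℂ (fun w => ∮ t in C(0, R), (1 / t ^ 2) • f (w + t • u)) z := by
  borelize E
  have hε : 0 < ε := by nlinarith [norm_nonneg u]
  set k : ℝ → ℂ := fun θ => deriv (circleMap 0 R) θ * (1 / circleMap 0 R θ ^ 2)
  have hk : Continuous k := by
    simp only [k, deriv_circleMap]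
    exact (continuous_circleMap 0 R).mul continuous_const |>.mul <| continuous_const.div
      ((continuous_circleMap 0 R).pow 2) fun θ => pow_ne_zero 2 (circleMap_ne_center hR.ne')
  have hnorm_k : ∀ θ, ‖k θ‖ = R⁻¹ := fun θ => by
    simp [k, deriv_circleMap, abs_of_pos hR, sq, field]
  have hmem : ∀ w ∈ ball z (ε / 2), ∀ θ : ℝ, w + circleMap 0 R θ • u ∈ ball z ε :=
    fun w hw θ => add_smul_mem_ball hw (by simp [abs_of_pos hR]) hRu
  have hdiff : ∀ θ, ∀ w ∈ ball z (ε / 2), HasFDerivAt (fun w => k θ • f (w + circleMap 0 R θ • u))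
      (k θ • fderiv ℂ f (w + circleMap 0 R θ • u)) w := fun θ w hw =>
    ((hasFDerivAt_comp_add_right _).2
      (hf.differentiableAt (isOpen_ball.mem_nhds (hmem w hw θ))).hasFDerivAt).const_smul (k θ)
  have hcont : ∀ w ∈ ball z (ε / 2), Continuous fun θ => k θ • f (w + circleMap 0 R θ • u) :=
    fun w hw => hk.smul <| hf.continuousOn.comp_continuous (by fun_prop) (hmem w hw)
  have hint := intervalIntegral.hasFDerivAt_integral_of_dominated_of_fderiv_le
    (μ := MeasureTheory.volume) (a := 0) (b := 2 * π) (bound := fun _ => R⁻¹ * C)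
    (ball_mem_nhds z (half_pos hε))
    (eventually_of_mem (ball_mem_nhds z (half_pos hε)) fun w hw => (hcont w hw).aestronglyMeasurable)
    ((hcont z (mem_ball_self (half_pos hε))).intervalIntegrable _ _)
    (hk.aestronglyMeasurable.smul ((measurable_fderiv ℂ f).comp (by fun_prop)).aestronglyMeasurable)
    (Eventually.of_forall fun θ _ w hw => by
      rw [norm_smul, hnorm_k]
      exact mul_le_mul_of_nonneg_left (hC _ (hmem w hw θ)) (inv_nonneg.2 hR.le))
    intervalIntegrable_const (Eventually.of_forall fun θ _ => hdiff θ)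
  exact hint.differentiableAt.congr_of_eventuallyEq (Eventually.of_forall fun w => by
    simp only [circleIntegral, k, smul_smul])

theorem DifferentiableOn.differentiableAt_fderiv_apply [FiniteDimensional ℂ E] [CompleteSpace F]
    [SecondCountableTopology F] (hf : DifferentiableOn ℂ f s) (hs : IsOpen s) (hz : z ∈ s)
    (u : E) : DifferentiableAt ℂ (fun w => fderiv ℂ f w u) z := by
  obtain ⟨C, hC⟩ := hf.exists_eventually_norm_fderiv_le (hs.mem_nhds hz)
  obtain ⟨ε, hε, hεs⟩ := Metric.mem_nhds_iff.1 (inter_mem (hs.mem_nhds hz) hC)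
  set R := ε / (4 * (‖u‖ + 1))
  have hR : 0 < R := by positivity
  have hRu : R * ‖u‖ < ε / 2 := by
    rw [div_mul_eq_mul_div, div_lt_div_iff₀ (by positivity) two_pos]
    nlinarith [norm_nonneg u]
  have hrepr : ∀ w ∈ ball z (ε / 2),
      fderiv ℂ f w u = (2 * π * I)⁻¹ • ∮ t in C(0, R), (1 / t ^ 2) • f (w + t • u) :=
    fun w hw => hf.fderiv_apply_eq_circleIntegral hs hR fun t ht =>
      (hεs (add_smul_mem_ball hw (mem_closedBall_zero_iff.1 ht) hRu)).1
  exact ((differentiableAt_circleIntegral_comp_add_smul (hf.mono fun w hw => (hεs hw).1)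
    (fun w hw => (hεs hw).2) hR hRu).const_smul _).congr_of_eventuallyEq
    (eventually_of_mem (ball_mem_nhds z (half_pos hε)) hrepr)

theorem DifferentiableOn.differentiableAt_fderiv [FiniteDimensional ℂ E] [CompleteSpace F]
    [SecondCountableTopology F] (hf : DifferentiableOn ℂ f s) (hs : IsOpen s) (hz : z ∈ s) :
    DifferentiableAt ℂ (fderiv ℂ f) z :=
  differentiableAt_clm_of_forall_apply (hf.differentiableAt_fderiv_apply hs hz)

end Holomorphic

theorem ContinuousLinearMap.apply_eq_mul_ringInverse_mul {𝕜 E : Type*} [NontriviallyNormedField 𝕜]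
    [NormedAddCommGroup E] [NormedSpace 𝕜 E] {A B : E →L[𝕜] E} {P Q : E →L[𝕜] E →L[𝕜] E}
    (hA : A.IsInvertible) (h : ∀ u v, A.inverse (P u v) = B.inverse (Q u v)) (u : E) :
    P u = A * Ring.inverse B * Q u := by
  ext v
  rw [ringInverse_eq_inverse]
  exact (hA.self_apply_inverse _).symm.trans (congrArg A (h u v))

theorem preSchwarzian_eq_iff_affine_general (n : ℕ)
    (Ω : Set (Fin n → ℂ)) (hΩ : IsOpen Ω) (hconn : IsConnected Ω)
    (f g : (Fin n → ℂ) → (Fin n → ℂ))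
    (hfinv : ∀ z ∈ Ω, ∃ e : (Fin n → ℂ) ≃L[ℂ] (Fin n → ℂ),
      (e : (Fin n → ℂ) →L[ℂ] (Fin n → ℂ)) = fderiv ℂ f z)
    (hginv : ∀ z ∈ Ω, ∃ e : (Fin n → ℂ) ≃L[ℂ] (Fin n → ℂ),
      (e : (Fin n → ℂ) →L[ℂ] (Fin n → ℂ)) = fderiv ℂ g z)
    (hpre : ∀ z ∈ Ω, ∀ u v : Fin n → ℂ,
      (fderiv ℂ f z).inverse (fderiv ℂ (fderiv ℂ f) z u v) =
      (fderiv ℂ g z).inverse (fderiv ℂ (fderiv ℂ g) z u v)) :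
    ∃ (A : (Fin n → ℂ) ≃L[ℂ] (Fin n → ℂ)) (b : Fin n → ℂ),
      ∀ z ∈ Ω, f z = A (g z) + b := by
  have hf : DifferentiableOn ℂ f Ω := fun z hz =>
    (differentiableAt_of_isInvertible_fderiv (hfinv z hz)).differentiableWithinAt
  have hg : DifferentiableOn ℂ g Ω := fun z hz =>
    (differentiableAt_of_isInvertible_fderiv (hginv z hz)).differentiableWithinAt
  have hφ : ∀ z ∈ Ω, HasFDerivAt (fun w => fderiv ℂ f w * Ring.inverse (fderiv ℂ g w)) 0 z :=
    fun z hz => (hf.differentiableAt_fderiv hΩ hz).hasFDerivAt.mul_ringInverse_eq_zero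
      (hg.differentiableAt_fderiv hΩ hz).hasFDerivAt (ContinuousLinearMap.IsInvertible.isUnit
        (hginv z hz)) (ContinuousLinearMap.apply_eq_mul_ringInverse_mul (hfinv z hz) (hpre z hz))
  obtain ⟨C, hC⟩ := hΩ.exists_is_const_of_fderiv_eq_zero hconn.isPreconnected
    (fun z hz => (hφ z hz).differentiableAt.differentiableWithinAt) fun z hz => (hφ z hz).fderiv
  obtain ⟨z₀, hz₀⟩ := hconn.nonempty
  obtain ⟨A, hA⟩ : C.IsInvertible := by
    rw [← hC z₀ hz₀, ContinuousLinearMap.ringInverse_eq_inverse]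
    exact .comp (hfinv z₀ hz₀) (.inverse (hginv z₀ hz₀))
  have hDf : ∀ z ∈ Ω, fderiv ℂ f z = (A : (Fin n → ℂ) →L[ℂ] (Fin n → ℂ)) * fderiv ℂ g z :=
    fun z hz => by
      rw [hA, ← hC z hz, mul_assoc, Ring.inverse_mul_cancel _
        (ContinuousLinearMap.IsInvertible.isUnit (hginv z hz)), mul_one]
  obtain ⟨b, hb⟩ := hΩ.exists_eq_add_of_fderiv_eq hconn.isPreconnected hf
    (A.differentiable.comp_differentiableOn hg) fun z hz => by
      rw [hDf z hz, fderiv_comp z A.differentiableAt (hg.differentiableAt (hΩ.mem_nhds hz)),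
        A.fderiv]
      rfl
  exact ⟨A, b, hb⟩

/-- If two locally biholomorphic maps on a connected open set have equal pre-Schwarzians
`Df⁻¹D²f = Dg⁻¹D²g`, then `f = A ∘ g + b` for a constant invertible `A` and `b ∈ ℂⁿ`. -/
theorem preSchwarzian_eq_iff_affine (n : ℕ)
    (Ω : Set (Fin n → ℂ)) (hΩ : IsOpen Ω) (hconn : IsConnected Ω)
    (f g : (Fin n → ℂ) → (Fin n → ℂ))
    (hf : DifferentiableOn ℂ f Ω) (hg : DifferentiableOn ℂ g Ω)
    (hfinv : ∀ z ∈ Ω, ∃ e : (Fin n → ℂ) ≃L[ℂ] (Fin n → ℂ),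
      (e : (Fin n → ℂ) →L[ℂ] (Fin n → ℂ)) = fderiv ℂ f z)
    (hginv : ∀ z ∈ Ω, ∃ e : (Fin n → ℂ) ≃L[ℂ] (Fin n → ℂ),
      (e : (Fin n → ℂ) →L[ℂ] (Fin n → ℂ)) = fderiv ℂ g z)
    (hpre : ∀ z ∈ Ω, ∀ u v : Fin n → ℂ,
      (fderiv ℂ f z).inverse (fderiv ℂ (fderiv ℂ f) z u v) =
      (fderiv ℂ g z).inverse (fderiv ℂ (fderiv ℂ g) z u v)) :
    ∃ (A : (Fin n → ℂ) ≃L[ℂ] (Fin n → ℂ)) (b : Fin n → ℂ),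
      ∀ z ∈ Ω, f z = A (g z) + b :=
  preSchwarzian_eq_iff_affine_general n Ω hΩ hconn f g hfinv hginv hpre
end

section
/- Let f be holomorphic on the unit disk 𝔻 with nonvanishing derivative, f(0)=0, f'(0)=1, and let F : 𝔹² → ℂ² be the Roper–Suffridge extension F(z₁,z₂) = (f(z₁), √(f'(z₁)) · z₂), where √(f'(z₁)) = exp(½ log f'(z₁)) with log f'(0)=0. Then DF(z) is invertible for all z ∈ 𝔹², and the pre-Schwarzian of F satisfies: DF(z)⁻¹ D²F(z)(v, w) has first component (f''/f')(z₁) v₁ w₁ and second component (½ z₂ Sf(z₁)) v₁ w₁ + ½ (f''/f')(z₁)(v₁ w₂ + v₂ w₁), where Sf = (f''/f')' − ½ (f''/f')² is the Schwarzian derivative of f. -/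
/-!
Writing `F(z) = (φ(z₁), ψ(z₁) z₂)`, the derivative `DF` is the lower triangular matrix
`[[φ', 0], [ψ' z₂, ψ]]`, whose inverse and whose derivative `D²F` are explicit, so
`DF⁻¹ D²F` can be read off for arbitrary `φ, ψ`. For `φ = f` and `ψ = exp (L / 2)` with
`f' = exp L`, the logarithmic derivatives are `f''/f' = L'`, `ψ'/ψ = L'/2` and
`ψ''/ψ = L''/2 + L'²/4`, which turns the general formula into the Schwarzian one.
-/

open Complex Metric Set

open Filter Topology

section LowerTriangular

variable {𝕜 : Type*} [NontriviallyNormedField 𝕜]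

open ContinuousLinearMap in
def lowerTriangular (a b c : 𝕜) : (Fin 2 → 𝕜) →L[𝕜] (Fin 2 → 𝕜) :=
  pi ![a • proj 0, b • proj 0 + c • proj 1]

@[simp]
theorem lowerTriangular_apply (a b c : 𝕜) (v : Fin 2 → 𝕜) :
    lowerTriangular a b c v = ![a * v 0, b * v 0 + c * v 1] := by
  ext i
  fin_cases i <;> simp [lowerTriangular]

theorem lowerTriangular_eq_add (a b c : 𝕜) :
    lowerTriangular a b c =
      a • lowerTriangular 1 0 0 + b • lowerTriangular 0 1 0 + c • lowerTriangular 0 0 1 := by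
  ext v i
  fin_cases i <;> simp

theorem lowerTriangular_leftInverse {a c : 𝕜} (ha : a ≠ 0) (hc : c ≠ 0) (b : 𝕜) :
    Function.LeftInverse (lowerTriangular a⁻¹ (-b / (a * c)) c⁻¹) (lowerTriangular a b c) := by
  intro v
  ext i
  fin_cases i
  · simp [ha]
  · simp
    field_simp
    ring

theorem lowerTriangular_rightInverse {a c : 𝕜} (ha : a ≠ 0) (hc : c ≠ 0) (b : 𝕜) :
    Function.RightInverse (lowerTriangular a⁻¹ (-b / (a * c)) c⁻¹) (lowerTriangular a b c) := by
  intro v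
  ext i
  fin_cases i
  · simp [ha]
  · simp
    field_simp
    ring

def lowerTriangularEquiv {a c : 𝕜} (ha : a ≠ 0) (hc : c ≠ 0) (b : 𝕜) :
    (Fin 2 → 𝕜) ≃L[𝕜] (Fin 2 → 𝕜) :=
  .equivOfInverse _ _ (lowerTriangular_leftInverse ha hc b) (lowerTriangular_rightInverse ha hc b)

theorem isInvertible_lowerTriangular {a c : 𝕜} (ha : a ≠ 0) (hc : c ≠ 0) (b : 𝕜) :
    (lowerTriangular a b c).IsInvertible :=
  ⟨lowerTriangularEquiv ha hc b, rfl⟩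

theorem inverse_lowerTriangular {a c : 𝕜} (ha : a ≠ 0) (hc : c ≠ 0) (b : 𝕜) :
    (lowerTriangular a b c).inverse = lowerTriangular a⁻¹ (-b / (a * c)) c⁻¹ :=
  ContinuousLinearMap.inverse_equiv (lowerTriangularEquiv ha hc b)

variable {E : Type*} [NormedAddCommGroup E] [NormedSpace 𝕜 E]

theorem fderiv_lowerTriangular_apply {a b c : E → 𝕜} {a' b' c' : E →L[𝕜] 𝕜} {x : E}
    (ha : HasFDerivAt a a' x) (hb : HasFDerivAt b b' x) (hc : HasFDerivAt c c' x) (v : E) :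
    fderiv 𝕜 (fun y => lowerTriangular (a y) (b y) (c y)) x v =
      lowerTriangular (a' v) (b' v) (c' v) := by
  simp_rw [lowerTriangular_eq_add (a _), lowerTriangular_eq_add (a' v)]
  rw [(((ha.smul_const (lowerTriangular (1 : 𝕜) 0 0)).fun_add
    (hb.smul_const (lowerTriangular (0 : 𝕜) 1 0))).fun_add
    (hc.smul_const (lowerTriangular (0 : 𝕜) 0 1))).fderiv]
  rfl

end LowerTriangular

section RoperSuffridgeMap

variable {𝕜 : Type*} [NontriviallyNormedField 𝕜]

def roperSuffridgeMap (φ ψ : 𝕜 → 𝕜) (z : Fin 2 → 𝕜) : Fin 2 → 𝕜 :=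
  ![φ (z 0), ψ (z 0) * z 1]

theorem hasFDerivAt_roperSuffridgeMap {φ ψ : 𝕜 → 𝕜} {φ' ψ' : 𝕜} {z : Fin 2 → 𝕜}
    (hφ : HasDerivAt φ φ' (z 0)) (hψ : HasDerivAt ψ ψ' (z 0)) :
    HasFDerivAt (roperSuffridgeMap φ ψ) (lowerTriangular φ' (ψ' * z 1) (ψ (z 0))) z := by
  have hz0 := hasFDerivAt_apply (𝕜 := 𝕜) 0 z
  rw [hasFDerivAt_pi']
  intro i
  fin_cases i
  · refine (hφ.comp_hasFDerivAt z hz0).congr_fderiv ?_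
    ext v; simp
  · refine ((hψ.comp_hasFDerivAt z hz0).mul (hasFDerivAt_apply 1 z)).congr_fderiv ?_
    ext v; simp; ring

theorem fderiv_roperSuffridgeMap_eventuallyEq {φ ψ : 𝕜 → 𝕜} {z : Fin 2 → 𝕜}
    (hφ : ∀ᶠ s in 𝓝 (z 0), DifferentiableAt 𝕜 φ s)
    (hψ : ∀ᶠ s in 𝓝 (z 0), DifferentiableAt 𝕜 ψ s) :
    fderiv 𝕜 (roperSuffridgeMap φ ψ) =ᶠ[𝓝 z]
      fun y => lowerTriangular (deriv φ (y 0)) (deriv ψ (y 0) * y 1) (ψ (y 0)) := by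
  have hcont : ContinuousAt (fun y : Fin 2 → 𝕜 => y 0) z := (continuous_apply 0).continuousAt
  filter_upwards [hcont.eventually hφ, hcont.eventually hψ] with y hφy hψy
  exact (hasFDerivAt_roperSuffridgeMap hφy.hasDerivAt hψy.hasDerivAt).fderiv

theorem fderiv_fderiv_roperSuffridgeMap_apply {φ ψ : 𝕜 → 𝕜} {z : Fin 2 → 𝕜}
    (hφ : ∀ᶠ s in 𝓝 (z 0), DifferentiableAt 𝕜 φ s)
    (hψ : ∀ᶠ s in 𝓝 (z 0), DifferentiableAt 𝕜 ψ s)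
    (hφ' : DifferentiableAt 𝕜 (deriv φ) (z 0)) (hψ' : DifferentiableAt 𝕜 (deriv ψ) (z 0))
    (v w : Fin 2 → 𝕜) :
    fderiv 𝕜 (fderiv 𝕜 (roperSuffridgeMap φ ψ)) z v w =
      ![deriv (deriv φ) (z 0) * v 0 * w 0,
        (deriv (deriv ψ) (z 0) * z 1 * v 0 + deriv ψ (z 0) * v 1) * w 0 +
          deriv ψ (z 0) * v 0 * w 1] := by
  have hz0 := hasFDerivAt_apply (𝕜 := 𝕜) 0 z
  have ha := hφ'.hasDerivAt.comp_hasFDerivAt z hz0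
  have hb := (hψ'.hasDerivAt.comp_hasFDerivAt z hz0).mul (hasFDerivAt_apply 1 z)
  have hc := hψ.self_of_nhds.hasDerivAt.comp_hasFDerivAt z hz0
  rw [(fderiv_roperSuffridgeMap_eventuallyEq hφ hψ).fderiv_eq,
    fderiv_lowerTriangular_apply (a := fun y : Fin 2 → 𝕜 => deriv φ (y 0))
      (b := fun y : Fin 2 → 𝕜 => deriv ψ (y 0) * y 1) (c := fun y : Fin 2 → 𝕜 => ψ (y 0))
      ha hb hc]
  ext i
  fin_cases i
  · simp
  · simp only [lowerTriangular_apply, add_apply, smul_apply, ContinuousLinearMap.proj_apply,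
      smul_eq_mul, Function.comp_apply, Fin.mk_one, Matrix.cons_val_one, Matrix.cons_val_fin_one]
    ring

theorem isInvertible_fderiv_roperSuffridgeMap {φ ψ : 𝕜 → 𝕜} {z : Fin 2 → 𝕜}
    (hφ : DifferentiableAt 𝕜 φ (z 0)) (hψ : DifferentiableAt 𝕜 ψ (z 0))
    (hφ'0 : deriv φ (z 0) ≠ 0) (hψ0 : ψ (z 0) ≠ 0) :
    (fderiv 𝕜 (roperSuffridgeMap φ ψ) z).IsInvertible := by
  rw [(hasFDerivAt_roperSuffridgeMap hφ.hasDerivAt hψ.hasDerivAt).fderiv]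
  exact isInvertible_lowerTriangular hφ'0 hψ0 _

theorem inverse_fderiv_apply_fderiv_fderiv_roperSuffridgeMap {φ ψ : 𝕜 → 𝕜} {z : Fin 2 → 𝕜}
    (hφ : ∀ᶠ s in 𝓝 (z 0), DifferentiableAt 𝕜 φ s)
    (hψ : ∀ᶠ s in 𝓝 (z 0), DifferentiableAt 𝕜 ψ s)
    (hφ' : DifferentiableAt 𝕜 (deriv φ) (z 0)) (hψ' : DifferentiableAt 𝕜 (deriv ψ) (z 0))
    (hφ'0 : deriv φ (z 0) ≠ 0) (hψ0 : ψ (z 0) ≠ 0) (v w : Fin 2 → 𝕜) :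
    (fderiv 𝕜 (roperSuffridgeMap φ ψ) z).inverse
        (fderiv 𝕜 (fderiv 𝕜 (roperSuffridgeMap φ ψ)) z v w) =
      ![deriv (deriv φ) (z 0) / deriv φ (z 0) * v 0 * w 0,
        (deriv (deriv ψ) (z 0) / ψ (z 0) -
            deriv ψ (z 0) / ψ (z 0) * (deriv (deriv φ) (z 0) / deriv φ (z 0))) * z 1 * v 0 * w 0 +
          deriv ψ (z 0) / ψ (z 0) * (v 0 * w 1 + v 1 * w 0)] := by
  rw [fderiv_fderiv_roperSuffridgeMap_apply hφ hψ hφ' hψ',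
    (hasFDerivAt_roperSuffridgeMap hφ.self_of_nhds.hasDerivAt
      hψ.self_of_nhds.hasDerivAt).fderiv, inverse_lowerTriangular hφ'0 hψ0]
  ext i
  fin_cases i <;> simp <;> ring

end RoperSuffridgeMap

theorem hasDerivAt_deriv_of_exp_eq {f L : ℂ → ℂ} {U : Set ℂ} (hU : IsOpen U)
    (hL : DifferentiableOn ℂ L U) (hLexp : ∀ z ∈ U, Complex.exp (L z) = deriv f z) {s : ℂ}
    (hs : s ∈ U) : HasDerivAt (deriv f) (deriv f s * deriv L s) s := by
  have hexp := (hL.differentiableAt (hU.mem_nhds hs)).hasDerivAt.cexp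
  rw [hLexp s hs] at hexp
  exact hexp.congr_of_eventuallyEq
    (eventually_of_mem (hU.mem_nhds hs) fun z hz => (hLexp z hz).symm)

theorem deriv_deriv_div_deriv_eqOn_of_exp_eq {f L : ℂ → ℂ} {U : Set ℂ} (hU : IsOpen U)
    (hL : DifferentiableOn ℂ L U) (hLexp : ∀ z ∈ U, Complex.exp (L z) = deriv f z) :
    EqOn (fun s => deriv (deriv f) s / deriv f s) (deriv L) U := fun s hs => by
  dsimp only
  rw [(hasDerivAt_deriv_of_exp_eq hU hL hLexp hs).deriv, ← hLexp s hs]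
  field_simp [Complex.exp_ne_zero]

theorem deriv_deriv_cexp {h : ℂ → ℂ} {s : ℂ} (hh : AnalyticAt ℂ h s) :
    deriv (deriv fun t => Complex.exp (h t)) s =
      (deriv (deriv h) s + deriv h s ^ 2) * Complex.exp (h s) := by
  have hderiv :
      deriv (fun t => Complex.exp (h t)) =ᶠ[𝓝 s] fun t => Complex.exp (h t) * deriv h t :=
    hh.eventually_analyticAt.mono fun t ht => deriv_cexp ht.differentiableAt
  rw [hderiv.deriv_eq,
    (hh.differentiableAt.hasDerivAt.cexp.fun_mul hh.deriv.differentiableAt.hasDerivAt).deriv]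
  ring

theorem roperSuffridge_preSchwarzian_general (f : ℂ → ℂ)
    (hf : DifferentiableOn ℂ f (ball (0:ℂ) 1))
    (L : ℂ → ℂ)
    (hL : DifferentiableOn ℂ L (ball (0:ℂ) 1))
    (hLexp : ∀ z ∈ ball (0:ℂ) 1, Complex.exp (L z) = deriv f z)
    (F : (Fin 2 → ℂ) → (Fin 2 → ℂ))
    (hF : ∀ z : Fin 2 → ℂ, F z = ![f (z 0), Complex.exp ((1/2 : ℂ) * L (z 0)) * z 1]) :
    ∀ z : Fin 2 → ℂ, ‖z 0‖ ^ 2 + ‖z 1‖ ^ 2 < 1 →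
      (∃ e : (Fin 2 → ℂ) ≃L[ℂ] (Fin 2 → ℂ),
        (e : (Fin 2 → ℂ) →L[ℂ] (Fin 2 → ℂ)) = fderiv ℂ F z) ∧
      ∀ v w : Fin 2 → ℂ,
        ((fderiv ℂ F z).inverse (fderiv ℂ (fderiv ℂ F) z v w)) 0 =
          (deriv (deriv f) (z 0) / deriv f (z 0)) * v 0 * w 0 ∧
        ((fderiv ℂ F z).inverse (fderiv ℂ (fderiv ℂ F) z v w)) 1 =
          ((1/2 : ℂ) * z 1 *
              (deriv (fun t => deriv (deriv f) t / deriv f t) (z 0) -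
                (1/2 : ℂ) * (deriv (deriv f) (z 0) / deriv f (z 0)) ^ 2)) * v 0 * w 0 +
            (1/2 : ℂ) * (deriv (deriv f) (z 0) / deriv f (z 0)) *
              (v 0 * w 1 + v 1 * w 0) := by
  intro z hz
  have hz0 : z 0 ∈ ball (0:ℂ) 1 := by
    rw [mem_ball_zero_iff]
    nlinarith [norm_nonneg (z 0), norm_nonneg (z 1)]
  obtain rfl : F = roperSuffridgeMap f fun s => Complex.exp ((1/2 : ℂ) * L s) := funext hF
  have hhalfL : AnalyticAt ℂ (fun s => (1/2 : ℂ) * L s) (z 0) :=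
    analyticAt_const.mul (hL.analyticOnNhd isOpen_ball _ hz0)
  have hψ : AnalyticAt ℂ (fun s => Complex.exp ((1/2 : ℂ) * L s)) (z 0) := hhalfL.cexp
  have hf_ev := hf.eventually_differentiableAt (isOpen_ball.mem_nhds hz0)
  have hψ_ev := analyticAt_iff_eventually_differentiableAt.1 hψ
  have hf' := (hasDerivAt_deriv_of_exp_eq isOpen_ball hL hLexp hz0).differentiableAt
  have hf'0 : deriv f (z 0) ≠ 0 := hLexp _ hz0 ▸ Complex.exp_ne_zero _
  have hratio := deriv_deriv_div_deriv_eqOn_of_exp_eq isOpen_ball hL hLexp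
  refine ⟨isInvertible_fderiv_roperSuffridgeMap hf_ev.self_of_nhds hψ_ev.self_of_nhds hf'0
    (Complex.exp_ne_zero _), fun v w => ?_⟩
  rw [inverse_fderiv_apply_fderiv_fderiv_roperSuffridgeMap hf_ev hψ_ev hf'
      hψ.deriv.differentiableAt hf'0 (Complex.exp_ne_zero _), deriv_deriv_cexp hhalfL,
    deriv_cexp hhalfL.differentiableAt,
    (hratio.eventuallyEq_of_mem (isOpen_ball.mem_nhds hz0)).deriv_eq,
    show deriv (deriv f) (z 0) / deriv f (z 0) = deriv L (z 0) from hratio hz0]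
  simp only [deriv_const_mul_field', Matrix.cons_val_zero, Matrix.cons_val_one,
    Matrix.cons_val_fin_one, true_and]
  field_simp
  ring

/-- Pre-Schwarzian of the Roper–Suffridge extension
`F(z₁,z₂) = (f(z₁), √(f'(z₁))·z₂)`, where `√(f'(z₁)) = exp(½ L(z₁))` for the
holomorphic logarithm `L` of `f'` with `L 0 = 0`. -/
theorem roperSuffridge_preSchwarzian (f : ℂ → ℂ)
    (hf : DifferentiableOn ℂ f (ball (0:ℂ) 1))
    (hf' : ∀ z ∈ ball (0:ℂ) 1, deriv f z ≠ 0)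
    (hf0 : f 0 = 0) (hf'0 : deriv f 0 = 1)
    (L : ℂ → ℂ)
    (hL : DifferentiableOn ℂ L (ball (0:ℂ) 1))
    (hLexp : ∀ z ∈ ball (0:ℂ) 1, Complex.exp (L z) = deriv f z)
    (hL0 : L 0 = 0)
    (F : (Fin 2 → ℂ) → (Fin 2 → ℂ))
    (hF : ∀ z : Fin 2 → ℂ, F z = ![f (z 0), Complex.exp ((1/2 : ℂ) * L (z 0)) * z 1]) :
    ∀ z : Fin 2 → ℂ, ‖z 0‖ ^ 2 + ‖z 1‖ ^ 2 < 1 →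
      (∃ e : (Fin 2 → ℂ) ≃L[ℂ] (Fin 2 → ℂ),
        (e : (Fin 2 → ℂ) →L[ℂ] (Fin 2 → ℂ)) = fderiv ℂ F z) ∧
      ∀ v w : Fin 2 → ℂ,
        ((fderiv ℂ F z).inverse (fderiv ℂ (fderiv ℂ F) z v w)) 0 =
          (deriv (deriv f) (z 0) / deriv f (z 0)) * v 0 * w 0 ∧
        ((fderiv ℂ F z).inverse (fderiv ℂ (fderiv ℂ F) z v w)) 1 =
          ((1/2 : ℂ) * z 1 *
              (deriv (fun t => deriv (deriv f) t / deriv f t) (z 0) -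
                (1/2 : ℂ) * (deriv (deriv f) (z 0) / deriv f (z 0)) ^ 2)) * v 0 * w 0 +
            (1/2 : ℂ) * (deriv (deriv f) (z 0) / deriv f (z 0)) *
              (v 0 * w 1 + v 1 * w 0) :=
  roperSuffridge_preSchwarzian_general f hf L hL hLexp F hF
end
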